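/- Lemma C.1 (eigenvalues of the α-distance matrix are bounded away from zero). Let α ∈ (0,2), let x_1,…,x_n ∈ ℝ^{d(n)} follow the covariance or sphere model in the high-dimensional regime tr(Σ_{d(n)})/n^β → c > 0, set z_i = x_i/sqrt(tr Σ_d), and let D_α be the n×n matrix with entries (D_α)_{ij} = ‖z_i − z_j‖₂^α. Then, for fixed ε > 0, there exist a constant c' > 0 and N such that for all n ≥ N and every sample satisfying max_{i,j≤n} |x_iᵀx_j/tr(Σ_d) − δ_{ij}| ≤ n^{−β/2}(log n)^{(1+ε)/2} (the event E_X), every eigenvalue λ of D_α satisfies |λ| ≥ c'; moreover D_α has exactly one positive eigenvalue, which is at least (n−1)·c', and its remaining n−1 eigenvalues are at most −c'. -/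

import Mathlib

open MeasureTheory ProbabilityTheory Filter Matrix
open scoped Topology NNReal ENNReal

noncomputable section
def dotp {d : ℕ} (x y : Fin d → ℝ) : ℝ := ∑ i, x i * y i
def sqnorm {d : ℕ} (x : Fin d → ℝ) : ℝ := dotp x x
def IsCoordDist (ν : Measure ℝ) : Prop :=
  ν = gaussianReal 0 1 ∨
    (IsProbabilityMeasure ν ∧ (∃ C : ℝ, ∀ᵐ x ∂ν, |x| ≤ C) ∧
      (∫ x, x ∂ν) = 0 ∧ (∫ x, x ^ 2 ∂ν) = 1)
open scoped ComplexOrder in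
/-- The positive semidefinite square root of a positive semidefinite matrix
(the definition `Matrix.PosSemidef.sqrt` of the older Mathlib, removed since). -/
def Matrix.PosSemidef.sqrt {n 𝕜 : Type*} [Fintype n] [DecidableEq n] [RCLike 𝕜]
    {A : Matrix n n 𝕜} (hA : A.PosSemidef) : Matrix n n 𝕜 :=
  hA.isHermitian.eigenvectorUnitary.1 * diagonal ((↑) ∘ (√·) ∘ hA.isHermitian.eigenvalues) *
    (star hA.isHermitian.eigenvectorUnitary : Matrix n n 𝕜)
def IsCovarianceModel {d : ℕ} (S : Matrix (Fin d) (Fin d) ℝ) (hS : S.PosSemidef)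
    (μ : Measure (Fin d → ℝ)) : Prop :=
  ∃ ν : Measure ℝ, IsCoordDist ν ∧
    μ = (Measure.pi fun _ : Fin d => ν).map (fun w => hS.sqrt.mulVec w)
def IsSphereModel {d : ℕ} (S : Matrix (Fin d) (Fin d) ℝ) (hS : S.PosSemidef)
    (μ : Measure (Fin d → ℝ)) : Prop :=
  ∃ μZ : Measure (Fin d → ℝ), IsCovarianceModel S hS μZ ∧
    μ = μZ.map (fun z => (Real.sqrt S.trace / Real.sqrt (sqnorm z)) • z)
def OpNormOne {d : ℕ} (S : Matrix (Fin d) (Fin d) ℝ) : Prop :=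
  IsGreatest {r : ℝ | ∃ x : Fin d → ℝ, sqnorm x = 1 ∧ dotp x (S.mulVec x) = r} 1
def IsPSDKernel1 (q : ℝ → ℝ → ℝ) : Prop :=
  ∀ (N : ℕ) (u : Fin N → ℝ), (Matrix.of fun a b => q (u a) (u b)).PosSemidef
def AssumptionA1 (g : ℝ → ℝ → ℝ → ℝ) (gj : ℕ → ℝ → ℝ → ℝ) : Prop :=
  (∃ δ > (0:ℝ), ∀ u v t : ℝ, u ∈ Set.Icc (1 - δ) (1 + δ) → v ∈ Set.Icc (1 - δ) (1 + δ) →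
      |t| ≤ 1 + δ → HasSum (fun j : ℕ => gj j u v * t ^ j) (g u v t)) ∧
    ∀ j, IsPSDKernel1 (gj j)
def AssumptionA2 (g : ℝ → ℝ → ℝ → ℝ) : Prop :=
  ∃ δL > (0:ℝ), ∃ L : ℝ≥0, LipschitzOnWith L (fun u => g u u u) (Set.Icc (1 - δL) (1 + δL))
def AssumptionA3 (β : ℝ) (gj : ℕ → ℝ → ℝ → ℝ) : Prop :=
  (∀ i ≤ ⌊2 / β⌋₊, ∃ U ∈ 𝓝 ((1:ℝ), (1:ℝ)),
      ContDiffOn ℝ (⌊2 / β⌋₊ + 1 - i) (fun p : ℝ × ℝ => gj i p.1 p.2) U) ∧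
    ∃ J, ⌊2 / β⌋₊ < J ∧ 0 < gj J 1 1
def kermap {d : ℕ} (g : ℝ → ℝ → ℝ → ℝ) (τ : ℝ) (x y : Fin d → ℝ) : ℝ :=
  g (sqnorm x / τ) (sqnorm y / τ) (dotp x y / τ)
def kernelMatrix {d n : ℕ} (k : (Fin d → ℝ) → (Fin d → ℝ) → ℝ)
    (xs : Fin n → Fin d → ℝ) : Matrix (Fin n) (Fin n) ℝ :=
  Matrix.of fun i j => k (xs i) (xs j)
def ridgeEstimator {d n : ℕ} (k : (Fin d → ℝ) → (Fin d → ℝ) → ℝ) (lam : ℝ)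
    (fstar : (Fin d → ℝ) → ℝ) (xs : Fin n → Fin d → ℝ) (x : Fin d → ℝ) : ℝ :=
  dotProduct (fun i => fstar (xs i))
    (((kernelMatrix k xs + lam • (1 : Matrix (Fin n) (Fin n) ℝ))⁻¹).mulVec
      (fun i => k (xs i) x))
def biasOf {d : ℕ} (est : (Fin d → ℝ) → ℝ) (fstar : (Fin d → ℝ) → ℝ)
    (μ : Measure (Fin d → ℝ)) : ℝ :=
  ∫ x, (est x - fstar x) ^ 2 ∂μ
def polyApproxError (d m : ℕ) (f : (Fin d → ℝ) → ℝ) (μ : Measure (Fin d → ℝ)) : ℝ :=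
  ⨅ p : {p : MvPolynomial (Fin d) ℝ // p.totalDegree ≤ m},
    ∫ x, (f x - MvPolynomial.eval x (p : MvPolynomial (Fin d) ℝ)) ^ 2 ∂μ
def alphaExpG (α : ℝ) (g : ℝ → ℝ → ℝ → ℝ) : Prop :=
  ∀ u v t : ℝ, g u v t = Real.exp (-(u + v - 2 * t) ^ (α / 2))


/-- The matrix of pairwise `α`-distances `‖z_i − z_j‖₂^α`. -/
def distMatrix {d n : ℕ} (α : ℝ) (zs : Fin n → Fin d → ℝ) : Matrix (Fin n) (Fin n) ℝ :=
  Matrix.of fun i j => (sqnorm (zs i - zs j)) ^ (α / 2)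


/-!
For `γ = α / 2 ∈ (0, 1)` and `r ≥ 0` one has `C_γ r ^ γ = ∫₀^∞ (1 - e^{-rs}) s^{-1-γ} ds` with
`C_γ > 0`. Hence for `v ⊥ 𝟙` the quadratic form `vᵀ D_α v` equals
`-C_γ⁻¹ ∫₀^∞ vᵀ G_s v s^{-1-γ} ds`, where `G_s = (e^{-s ‖z_i - z_j‖²})` is the Gaussian kernel
matrix. Expanding `e^{2s⟪z_i, z_j⟫}` gives `vᵀ G_s v = ∑ₖ (2s)ᵏ / k! · wᵀ (ZZᵀ)^{∘k} w` with
`w_i = v_i e^{-s ‖z_i‖²}`, a series of nonnegative terms by the Schur product theorem. On the event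
`E_X` the Gram matrix `ZZᵀ` is within `τₙ = n^{-β/2} (log n)^{(1+ε)/2}` of the identity entrywise,
so for `K > 2 / β` (where `n τₙ^K → 0`) its `K`-th Hadamard power dominates `½ I`. Keeping only the
`K`-th term for `s ∈ [1, 2]` yields `vᵀ D_α v ≤ -c' ‖v‖²` on `𝟙^⊥`, with `c'` independent of `n`.
A form that is negative definite on a hyperplane leaves at most one eigenvalue above `-c'`, and as
`tr D_α = 0` that eigenvalue is at least `(n - 1) c'`.
-/

open Real Set

section Points

variable {d : ℕ}

lemma dotp_eq_dotProduct (x y : Fin d → ℝ) : dotp x y = x ⬝ᵥ y := rfl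

lemma sqnorm_nonneg (x : Fin d → ℝ) : 0 ≤ sqnorm x :=
  dotProduct_self_star_nonneg x

lemma sqnorm_sub (x y : Fin d → ℝ) : sqnorm (x - y) = sqnorm x + sqnorm y - 2 * dotp x y := by
  simp only [sqnorm, dotp_eq_dotProduct, sub_dotProduct, dotProduct_sub, dotProduct_comm y x]
  ring

lemma dotp_smul_smul (a : ℝ) (x y : Fin d → ℝ) : dotp (a • x) (a • y) = a ^ 2 * dotp x y := by
  simp only [dotp_eq_dotProduct, smul_dotProduct, dotProduct_smul, smul_eq_mul]
  ring

lemma distMatrix_trace {n : ℕ} {α : ℝ} (hα : 0 < α) (z : Fin n → Fin d → ℝ) :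
    (distMatrix α z).trace = 0 := by
  simp [Matrix.trace, distMatrix, sqnorm, dotp, zero_rpow (half_pos hα).ne']

end Points

lemma dotProduct_of_mulVec {ι : Type*} [Fintype ι] (f : ι → ι → ℝ) (v : ι → ℝ) :
    v ⬝ᵥ Matrix.of f *ᵥ v = ∑ i, ∑ j, v i * v j * f i j := by
  simp only [dotProduct, Matrix.mulVec, Matrix.of_apply, Finset.mul_sum]
  exact Finset.sum_congr rfl fun i _ => Finset.sum_congr rfl fun j _ => by ring

section Kernels

variable {ι : Type*} [Fintype ι] {d : ℕ}

def gramPowForm (z : ι → Fin d → ℝ) (w : ι → ℝ) (k : ℕ) : ℝ :=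
  ∑ i, ∑ j, w i * w j * dotp (z i) (z j) ^ k

def gaussForm (z : ι → Fin d → ℝ) (v : ι → ℝ) (s : ℝ) : ℝ :=
  ∑ i, ∑ j, v i * v j * exp (-(sqnorm (z i - z j) * s))

lemma posSemidef_of_dotp_pow (z : ι → Fin d → ℝ) (k : ℕ) :
    (Matrix.of fun i j => dotp (z i) (z j) ^ k).PosSemidef := by
  induction k with
  | zero => simpa [Matrix.vecMulVec] using Matrix.posSemidef_vecMulVec_self_star (1 : ι → ℝ)
  | succ k ih =>
    have hgram : (Matrix.of fun i j => dotp (z i) (z j)).PosSemidef := by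
      convert Matrix.posSemidef_self_mul_conjTranspose (Matrix.of z) using 1
      ext i j
      simp [dotp, Matrix.mul_apply]
    have hpow : (Matrix.of fun i j => dotp (z i) (z j) ^ (k + 1)) =
        (Matrix.of fun i j => dotp (z i) (z j) ^ k) ⊙ Matrix.of fun i j => dotp (z i) (z j) := by
      ext i j
      simp [pow_succ]
    rw [hpow]
    exact ih.hadamard hgram

lemma gramPowForm_nonneg (z : ι → Fin d → ℝ) (w : ι → ℝ) (k : ℕ) : 0 ≤ gramPowForm z w k := by
  simpa [gramPowForm, dotProduct_of_mulVec] using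
    (posSemidef_of_dotp_pow z k).dotProduct_mulVec_nonneg w

lemma hasSum_gaussForm (z : ι → Fin d → ℝ) (v : ι → ℝ) (s : ℝ) :
    HasSum (fun k => (2 * s) ^ k / k.factorial *
        gramPowForm z (fun i => v i * exp (-(sqnorm (z i) * s))) k)
      (gaussForm z v s) := by
  have hentry : ∀ i j, HasSum
      (fun k => (2 * s) ^ k / k.factorial * ((v i * exp (-(sqnorm (z i) * s))) *
        (v j * exp (-(sqnorm (z j) * s))) * dotp (z i) (z j) ^ k))
      (v i * v j * exp (-(sqnorm (z i - z j) * s))) := by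
    intro i j
    have hsplit : v i * v j * exp (-(sqnorm (z i - z j) * s)) =
        (v i * exp (-(sqnorm (z i) * s))) * (v j * exp (-(sqnorm (z j) * s))) *
          exp (2 * s * dotp (z i) (z j)) := by
      rw [mul_mul_mul_comm (v i), mul_assoc (v i * v j), ← exp_add, ← exp_add, sqnorm_sub]
      congr 2
      ring
    have hexp : HasSum (fun k => (2 * s * dotp (z i) (z j)) ^ k / k.factorial)
        (exp (2 * s * dotp (z i) (z j))) := by
      rw [exp_eq_exp_ℝ]
      exact NormedSpace.expSeries_div_hasSum_exp _
    rw [hsplit]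
    exact (hexp.mul_left _).congr_fun fun k => by ring
  simpa only [gramPowForm, gaussForm, Finset.mul_sum] using
    hasSum_sum fun i _ => hasSum_sum fun j _ => hentry i j

lemma gaussForm_nonneg (z : ι → Fin d → ℝ) (v : ι → ℝ) {s : ℝ} (hs : 0 ≤ s) :
    0 ≤ gaussForm z v s :=
  (hasSum_gaussForm z v s).nonneg fun k => by
    have := gramPowForm_nonneg z (fun i => v i * exp (-(sqnorm (z i) * s))) k
    positivity

end Kernels

section NearOrthonormal

variable {ι : Type*} [Fintype ι] [DecidableEq ι] {d : ℕ} {z : ι → Fin d → ℝ} {τ : ℝ}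

lemma gramPowForm_ge (hτ0 : 0 ≤ τ) (hτ1 : τ ≤ 1)
    (hz : ∀ i j, |dotp (z i) (z j) - if i = j then 1 else 0| ≤ τ) (w : ι → ℝ) (K : ℕ) :
    (1 - K * τ - Fintype.card ι * τ ^ K) * ∑ i, w i ^ 2 ≤ gramPowForm z w K := by
  have hentry : ∀ i j, (if i = j then (1 - K * τ) * w i ^ 2 else 0) - τ ^ K * (|w i| * |w j|) ≤
      w i * w j * dotp (z i) (z j) ^ K := by
    intro i j
    split_ifs with hij
    · subst hij
      have hdiag : 1 - τ ≤ dotp (z i) (z i) := by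
        have := (abs_le.1 (hz i i)).1
        simp only [if_true] at this
        linarith
      have hpow : 1 - K * τ ≤ dotp (z i) (z i) ^ K :=
        calc 1 - K * τ = 1 + K * (-τ) := by ring
          _ ≤ (1 + -τ) ^ K := one_add_mul_le_pow (by linarith) K
          _ ≤ dotp (z i) (z i) ^ K := pow_le_pow_left₀ (by linarith) (by linarith) K
      nlinarith [sq_nonneg (w i), mul_nonneg (pow_nonneg hτ0 K) (mul_self_nonneg |w i|)]
    · have hoff : |dotp (z i) (z j)| ≤ τ := by simpa [hij] using hz i j
      have habs : |w i * w j * dotp (z i) (z j) ^ K| ≤ τ ^ K * (|w i| * |w j|) := by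
        rw [abs_mul, abs_mul, abs_pow, mul_comm]
        exact mul_le_mul_of_nonneg_right (pow_le_pow_left₀ (abs_nonneg _) hoff K) (by positivity)
      linarith [neg_abs_le (w i * w j * dotp (z i) (z j) ^ K)]
  have hsum := Finset.sum_le_sum fun i (_ : i ∈ Finset.univ) =>
    Finset.sum_le_sum fun j (_ : j ∈ Finset.univ) => hentry i j
  simp only [Finset.sum_sub_distrib, Finset.sum_ite_eq, Finset.mem_univ, if_true,
    ← Finset.mul_sum, ← Finset.sum_mul] at hsum
  have hcs : (∑ i, |w i|) ^ 2 ≤ Fintype.card ι * ∑ i, w i ^ 2 := by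
    simpa using sq_sum_le_card_mul_sum_sq (s := Finset.univ) (f := fun i => |w i|)
  have hτK : 0 ≤ τ ^ K := pow_nonneg hτ0 K
  rw [sq] at hcs
  refine le_trans ?_ hsum
  linarith [mul_le_mul_of_nonneg_left hcs hτK]

lemma gaussForm_ge (hτ0 : 0 ≤ τ) (hτ1 : τ ≤ 1)
    (hz : ∀ i j, |dotp (z i) (z j) - if i = j then 1 else 0| ≤ τ) {K : ℕ}
    (hK : K * τ + Fintype.card ι * τ ^ K ≤ 1 / 2) (v : ι → ℝ) {s : ℝ} (hs : s ∈ Icc 1 2) :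
    2 ^ K / K.factorial * exp (-8) / 2 * ∑ i, v i ^ 2 ≤ gaussForm z v s := by
  obtain ⟨hs1, hs2⟩ := hs
  set w : ι → ℝ := fun i => v i * exp (-(sqnorm (z i) * s))
  have hw : exp (-8) * ∑ i, v i ^ 2 ≤ ∑ i, w i ^ 2 := by
    rw [Finset.mul_sum]
    refine Finset.sum_le_sum fun i _ => ?_
    have hnorm : sqnorm (z i) ≤ 2 := by
      have := (abs_le.1 (hz i i)).2
      simp only [if_true] at this
      exact (show sqnorm (z i) ≤ 1 + τ by unfold sqnorm; linarith).trans (by linarith)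
    have hexp : exp (-8) ≤ exp (-(sqnorm (z i) * s)) ^ 2 := by
      rw [← exp_nat_mul, exp_le_exp]
      push_cast
      nlinarith [mul_nonneg (sqnorm_nonneg (z i)) (by linarith : (0 : ℝ) ≤ 2 - s)]
    calc exp (-8) * v i ^ 2 ≤ exp (-(sqnorm (z i) * s)) ^ 2 * v i ^ 2 :=
          mul_le_mul_of_nonneg_right hexp (sq_nonneg _)
      _ = w i ^ 2 := by ring
  have hgram : 1 / 2 * ∑ i, w i ^ 2 ≤ gramPowForm z w K :=
    le_trans (mul_le_mul_of_nonneg_right (by linarith)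
      (Finset.sum_nonneg fun i _ => sq_nonneg (w i))) (gramPowForm_ge hτ0 hτ1 hz w K)
  have hcoeff : (2 : ℝ) ^ K / K.factorial ≤ (2 * s) ^ K / K.factorial :=
    div_le_div_of_nonneg_right (pow_le_pow_left₀ (by norm_num) (by linarith) K) (by positivity)
  have hterm : (2 * s) ^ K / K.factorial * gramPowForm z w K ≤ gaussForm z v s :=
    le_hasSum (hasSum_gaussForm z v s) K fun k _ => by
      have := gramPowForm_nonneg z w k
      have : (0 : ℝ) ≤ s := by linarith
      positivity
  calc 2 ^ K / K.factorial * exp (-8) / 2 * ∑ i, v i ^ 2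
      = 2 ^ K / K.factorial * (exp (-8) / 2 * ∑ i, v i ^ 2) := by ring
    _ ≤ 2 ^ K / K.factorial * (1 / 2 * ∑ i, w i ^ 2) :=
        mul_le_mul_of_nonneg_left (by linarith) (by positivity)
    _ ≤ (2 * s) ^ K / K.factorial * gramPowForm z w K :=
        mul_le_mul hcoeff hgram (by positivity) (by positivity)
    _ ≤ gaussForm z v s := hterm

end NearOrthonormal

section FractionalPower

variable {γ : ℝ}

def fracPowConst (γ : ℝ) : ℝ := ∫ s in Ioi 0, (1 - exp (-s)) * s ^ (-1 - γ)

lemma integrableOn_one_sub_exp_mul_rpow (hγ0 : 0 < γ) (hγ1 : γ < 1) {r : ℝ} (hr : 0 ≤ r) :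
    IntegrableOn (fun s => (1 - exp (-(r * s))) * s ^ (-1 - γ)) (Ioi 0) := by
  have hcont : ContinuousOn (fun s => (1 - exp (-(r * s))) * s ^ (-1 - γ)) (Ioi 0) :=
    (by fun_prop : Continuous fun s => 1 - exp (-(r * s))).continuousOn.mul
      (continuousOn_id.rpow_const fun s hs => Or.inl (ne_of_gt hs))
  have hbound : ∀ s ∈ Ioi (0 : ℝ),
      ‖(1 - exp (-(r * s))) * s ^ (-1 - γ)‖ ≤ min (r * s) 1 * s ^ (-1 - γ) := by
    intro s hs
    have hrs : 0 ≤ r * s := mul_nonneg hr (le_of_lt hs)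
    have hexp : 0 ≤ 1 - exp (-(r * s)) := by
      linarith [exp_le_one_iff.2 (neg_nonpos.2 hrs)]
    rw [Real.norm_of_nonneg (mul_nonneg hexp (rpow_nonneg (le_of_lt hs) _))]
    refine mul_le_mul_of_nonneg_right (le_min ?_ ?_) (rpow_nonneg (le_of_lt hs) _)
    · linarith [add_one_le_exp (-(r * s))]
    · linarith [exp_pos (-(r * s))]
  rw [← Ioc_union_Ioi_eq_Ioi zero_le_one]
  refine IntegrableOn.union ?_ ?_
  · have hg : IntegrableOn (fun s => r * s ^ (-γ)) (Ioc 0 1) :=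
      ((intervalIntegrable_iff_integrableOn_Ioc_of_le zero_le_one).1
        (intervalIntegral.intervalIntegrable_rpow' (r := -γ) (by linarith))).const_mul r
    refine hg.mono' ((hcont.mono Ioc_subset_Ioi_self).aestronglyMeasurable measurableSet_Ioc)
      ((ae_restrict_iff' measurableSet_Ioc).2 (Eventually.of_forall fun s hs => ?_))
    refine (hbound s hs.1).trans ((mul_le_mul_of_nonneg_right (min_le_left _ _)
      (rpow_nonneg hs.1.le _)).trans_eq ?_)
    rw [mul_assoc, ← rpow_one_add' hs.1.le (by linarith)]
    ring_nf
  · refine (integrableOn_Ioi_rpow_of_lt (a := -1 - γ) (by linarith) one_pos).mono'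
      ((hcont.mono (Ioi_subset_Ioi zero_le_one)).aestronglyMeasurable measurableSet_Ioi)
      ((ae_restrict_iff' measurableSet_Ioi).2 (Eventually.of_forall fun s hs => ?_))
    refine (hbound s (mem_Ioi.2 (lt_trans one_pos hs))).trans ?_
    exact mul_le_of_le_one_left (rpow_nonneg (by linarith [mem_Ioi.1 hs]) _) (min_le_right _ _)

lemma integral_one_sub_exp_mul_rpow (hγ : γ ≠ 0) {r : ℝ} (hr : 0 ≤ r) :
    ∫ s in Ioi 0, (1 - exp (-(r * s))) * s ^ (-1 - γ) = fracPowConst γ * r ^ γ := by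
  rcases hr.eq_or_lt with rfl | hr
  · simp [zero_rpow hγ]
  have hscale : ∀ s ∈ Ioi (0 : ℝ), (1 - exp (-(r * s))) * s ^ (-1 - γ) =
      r ^ (1 + γ) * ((1 - exp (-(r * s))) * (r * s) ^ (-1 - γ)) := by
    intro s hs
    rw [mul_rpow hr.le (le_of_lt hs), mul_left_comm, ← mul_assoc (r ^ (1 + γ)),
      ← rpow_add hr]
    simp
  rw [setIntegral_congr_fun measurableSet_Ioi hscale, integral_const_mul,
    integral_comp_mul_left_Ioi (fun t => (1 - exp (-t)) * t ^ (-1 - γ)) 0 hr, mul_zero,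
    smul_eq_mul, fracPowConst, ← mul_assoc, ← rpow_neg_one, ← rpow_add hr, mul_comm]
  ring_nf

lemma fracPowConst_pos (hγ0 : 0 < γ) (hγ1 : γ < 1) : 0 < fracPowConst γ := by
  have hint := integrableOn_one_sub_exp_mul_rpow hγ0 hγ1 zero_le_one
  simp only [one_mul] at hint
  have hpos : ∀ s ∈ Ioi (0 : ℝ), 0 < (1 - exp (-s)) * s ^ (-1 - γ) := fun s hs =>
    mul_pos (by linarith [exp_lt_one_iff.2 (neg_lt_zero.2 hs)]) (rpow_pos_of_pos hs _)
  rw [fracPowConst, setIntegral_pos_iff_support_of_nonneg_ae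
    ((ae_restrict_iff' measurableSet_Ioi).2 (Eventually.of_forall fun s hs => (hpos s hs).le))
    hint]
  rw [inter_eq_right.2 fun s hs => Function.mem_support.2 (hpos s hs).ne', Real.volume_Ioi]
  exact ENNReal.zero_lt_top

end FractionalPower

section ConditionallyNegative

variable {ι : Type*} [Fintype ι] {v : ι → ℝ} {γ : ℝ}

lemma sum_mul_mul_exp_mul_eq (hv : ∑ i, v i = 0) (r : ι → ι → ℝ) (s t : ℝ) :
    (∑ i, ∑ j, v i * v j * exp (-(r i j * s))) * t =
      -∑ i, ∑ j, v i * v j * ((1 - exp (-(r i j * s))) * t) := by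
  have hvv : ∑ i, ∑ j, v i * v j * t = 0 := by
    simp only [mul_assoc, ← Finset.mul_sum, ← Finset.sum_mul, hv, zero_mul]
  calc (∑ i, ∑ j, v i * v j * exp (-(r i j * s))) * t
      = ∑ i, ∑ j, v i * v j * t - ∑ i, ∑ j, v i * v j * ((1 - exp (-(r i j * s))) * t) := by
        simp only [Finset.sum_mul, ← Finset.sum_sub_distrib]
        exact Finset.sum_congr rfl fun i _ => Finset.sum_congr rfl fun j _ => by ring
    _ = _ := by rw [hvv, zero_sub]

lemma integrableOn_sum_mul_exp_mul_rpow (hγ0 : 0 < γ) (hγ1 : γ < 1) {r : ι → ι → ℝ}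
    (hr : ∀ i j, 0 ≤ r i j) (hv : ∑ i, v i = 0) :
    IntegrableOn (fun s => (∑ i, ∑ j, v i * v j * exp (-(r i j * s))) * s ^ (-1 - γ))
      (Ioi 0) := by
  simp_rw [sum_mul_mul_exp_mul_eq hv r]
  exact (integrable_finsetSum _ fun i _ => integrable_finsetSum _ fun j _ =>
    (integrableOn_one_sub_exp_mul_rpow hγ0 hγ1 (hr i j)).const_mul _).neg

lemma fracPowConst_mul_sum_rpow (hγ0 : 0 < γ) (hγ1 : γ < 1) {r : ι → ι → ℝ}
    (hr : ∀ i j, 0 ≤ r i j) (hv : ∑ i, v i = 0) :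
    fracPowConst γ * ∑ i, ∑ j, v i * v j * r i j ^ γ =
      -∫ s in Ioi 0, (∑ i, ∑ j, v i * v j * exp (-(r i j * s))) * s ^ (-1 - γ) := by
  have hint : ∀ i j, IntegrableOn
      (fun s => v i * v j * ((1 - exp (-(r i j * s))) * s ^ (-1 - γ))) (Ioi 0) :=
    fun i j => (integrableOn_one_sub_exp_mul_rpow hγ0 hγ1 (hr i j)).const_mul _
  simp_rw [sum_mul_mul_exp_mul_eq hv r]
  rw [integral_neg, neg_neg, integral_finsetSum _ fun i _ => integrable_finsetSum _ fun j _ =>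
    hint i j, Finset.mul_sum]
  refine Finset.sum_congr rfl fun i _ => ?_
  rw [integral_finsetSum _ fun j _ => hint i j, Finset.mul_sum]
  refine Finset.sum_congr rfl fun j _ => ?_
  rw [integral_const_mul, integral_one_sub_exp_mul_rpow hγ0.ne' (hr i j)]
  ring

lemma le_integral_Ioi_mul_rpow {f : ℝ → ℝ} {m : ℝ} (hγ : γ ≤ 1)
    (hf : IntegrableOn (fun s => f s * s ^ (-1 - γ)) (Ioi 0))
    (hf0 : ∀ s ∈ Ioi 0, 0 ≤ f s) (hm : ∀ s ∈ Icc 1 2, m ≤ f s) :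
    m / 4 ≤ ∫ s in Ioi 0, f s * s ^ (-1 - γ) := by
  have hIoc : Ioc (1 : ℝ) 2 ⊆ Ioi 0 := fun s hs => lt_trans one_pos hs.1
  have hpoint : ∀ s ∈ Ioc (1 : ℝ) 2, m / 4 ≤ f s * s ^ (-1 - γ) := by
    intro s hs
    have hs1 : 1 ≤ s := hs.1.le
    have hrpow : 1 / 4 ≤ s ^ (-1 - γ) :=
      calc (1 : ℝ) / 4 ≤ (s ^ 2)⁻¹ := by
            rw [one_div]
            exact inv_anti₀ (by positivity) (by nlinarith [hs.2])
        _ = s ^ (-2 : ℝ) := by rw [rpow_neg (by linarith), rpow_two]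
        _ ≤ s ^ (-1 - γ) := rpow_le_rpow_of_exponent_le hs1 (by linarith)
    nlinarith [hm s (Ioc_subset_Icc_self hs), hf0 s (hIoc hs)]
  calc m / 4 = ∫ _ in Ioc (1 : ℝ) 2, m / 4 := by
        rw [setIntegral_const, Real.volume_real_Ioc]
        norm_num
    _ ≤ ∫ s in Ioc (1 : ℝ) 2, f s * s ^ (-1 - γ) :=
        setIntegral_mono_on (integrableOn_const measure_Ioc_lt_top.ne) (hf.mono_set hIoc)
          measurableSet_Ioc hpoint
    _ ≤ ∫ s in Ioi 0, f s * s ^ (-1 - γ) :=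
        setIntegral_mono_set hf ((ae_restrict_iff' measurableSet_Ioi).2 (Eventually.of_forall
          fun s hs => mul_nonneg (hf0 s hs) (rpow_nonneg (le_of_lt hs) _)))
          hIoc.eventuallyLE

variable [DecidableEq ι] {d : ℕ} {z : ι → Fin d → ℝ} {τ : ℝ}

lemma sum_mul_mul_sqnorm_sub_rpow_le (hγ0 : 0 < γ) (hγ1 : γ < 1) (hτ0 : 0 ≤ τ) (hτ1 : τ ≤ 1)
    (hz : ∀ i j, |dotp (z i) (z j) - if i = j then 1 else 0| ≤ τ) {K : ℕ}
    (hK : K * τ + Fintype.card ι * τ ^ K ≤ 1 / 2) (hv : ∑ i, v i = 0) :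
    ∑ i, ∑ j, v i * v j * sqnorm (z i - z j) ^ γ ≤
      -(2 ^ K / K.factorial * exp (-8) / 8 / fracPowConst γ) * ∑ i, v i ^ 2 := by
  have hr : ∀ i j, 0 ≤ sqnorm (z i - z j) := fun i j => sqnorm_nonneg _
  have hC := fracPowConst_pos hγ0 hγ1
  have hlow := le_integral_Ioi_mul_rpow hγ1.le (integrableOn_sum_mul_exp_mul_rpow hγ0 hγ1 hr hv)
    (fun s hs => gaussForm_nonneg z v (le_of_lt hs)) (fun s hs => gaussForm_ge hτ0 hτ1 hz hK v hs)
  have hrep := fracPowConst_mul_sum_rpow hγ0 hγ1 hr hv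
  set T := ∑ i, ∑ j, v i * v j * sqnorm (z i - z j) ^ γ
  have key : fracPowConst γ * T ≤ -(2 ^ K / K.factorial * exp (-8) / 8 * ∑ i, v i ^ 2) := by
    linarith
  calc T = fracPowConst γ * T / fracPowConst γ := by field_simp
    _ ≤ -(2 ^ K / K.factorial * exp (-8) / 8 * ∑ i, v i ^ 2) / fracPowConst γ :=
        div_le_div_of_nonneg_right key hC.le
    _ = _ := by ring

end ConditionallyNegative

lemma dotProduct_distMatrix_mulVec_le {n d : ℕ} {α τ : ℝ} (hα : α ∈ Ioo 0 2)
    {z : Fin n → Fin d → ℝ} (hτ0 : 0 ≤ τ) (hτ1 : τ ≤ 1)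
    (hz : ∀ i j, |dotp (z i) (z j) - if i = j then 1 else 0| ≤ τ) {K : ℕ}
    (hK : K * τ + n * τ ^ K ≤ 1 / 2) {v : Fin n → ℝ} (hv : ∑ i, v i = 0) :
    v ⬝ᵥ distMatrix α z *ᵥ v ≤
      -(2 ^ K / K.factorial * exp (-8) / 8 / fracPowConst (α / 2)) * (v ⬝ᵥ v) := by
  have h := sum_mul_mul_sqnorm_sub_rpow_le (γ := α / 2) (by linarith [hα.1]) (by linarith [hα.2])
    hτ0 hτ1 hz    (by simpa using hK) hv
  rw [distMatrix, dotProduct_of_mulVec]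
  simpa [dotProduct, sq] using h

theorem Matrix.IsHermitian.eigenvalues_le_or_eigenvalues_le {ι : Type*} [Fintype ι]
    [DecidableEq ι] {A : Matrix ι ι ℝ} (hA : A.IsHermitian) {w : ι → ℝ} {c : ℝ}
    (hq : ∀ v, v ⬝ᵥ w = 0 → v ⬝ᵥ A *ᵥ v ≤ -c * (v ⬝ᵥ v)) {i j : ι} (hij : i ≠ j) :
    hA.eigenvalues i ≤ -c ∨ hA.eigenvalues j ≤ -c := by
  set u : ι → ι → ℝ := fun k => hA.eigenvectorBasis k
  have horth : ∀ k l, u k ⬝ᵥ u l = if k = l then 1 else 0 := fun k l => by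
    simpa [u, EuclideanSpace.inner_eq_star_dotProduct, eq_comm] using
      orthonormal_iff_ite.1 hA.eigenvectorBasis.orthonormal l k
  have hmul : ∀ k, A *ᵥ u k = hA.eigenvalues k • u k := hA.mulVec_eigenvectorBasis
  -- the plane spanned by two eigenvectors meets the hyperplane `w⊥` nontrivially
  obtain ⟨a, b, hab, hw⟩ : ∃ a b : ℝ, 0 < a ^ 2 + b ^ 2 ∧ (a • u i + b • u j) ⬝ᵥ w = 0 := by
    by_cases h : u i ⬝ᵥ w = 0
    · exact ⟨1, 0, by norm_num, by simp [h]⟩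
    · refine ⟨u j ⬝ᵥ w, -(u i ⬝ᵥ w), ?_, ?_⟩
      · rw [neg_sq]
        exact add_pos_of_nonneg_of_pos (sq_nonneg _) (sq_pos_of_ne_zero h)
      simp only [add_dotProduct, smul_dotProduct, smul_eq_mul]
      ring
  have h := hq _ hw
  simp only [mulVec_add, mulVec_smul, hmul, dotProduct_add, add_dotProduct, dotProduct_smul,
    smul_dotProduct, horth, hij, hij.symm, if_true, if_false, smul_eq_mul] at h
  by_contra! hgt
  have hmin : -c < min (hA.eigenvalues i) (hA.eigenvalues j) := lt_min hgt.1 hgt.2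
  nlinarith [mul_pos (sub_pos.2 hmin) hab,
    mul_nonneg (sub_nonneg.2 (min_le_left (hA.eigenvalues i) (hA.eigenvalues j))) (sq_nonneg a),
    mul_nonneg (sub_nonneg.2 (min_le_right (hA.eigenvalues i) (hA.eigenvalues j))) (sq_nonneg b)]

section SumZero

variable {ι : Type*} [Fintype ι] {μ : ι → ℝ} {c : ℝ}

lemma exists_le_and_forall_ne_le_neg [Nonempty ι] (hsum : ∑ i, μ i = 0) (hc : 0 < c)
    (hpair : ∀ i j, i ≠ j → μ i ≤ -c ∨ μ j ≤ -c) :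
    ∃ i₀, ((Fintype.card ι : ℝ) - 1) * c ≤ μ i₀ ∧ ∀ j ≠ i₀, μ j ≤ -c := by
  classical
  obtain ⟨i₀, hi₀⟩ : ∃ i₀, -c < μ i₀ := by
    by_contra! h
    have hle : ∑ i, μ i ≤ ∑ _i : ι, -c := Finset.sum_le_sum fun i _ => h i
    rw [Finset.sum_const, Finset.card_univ, nsmul_eq_mul, hsum] at hle
    nlinarith [(Nat.one_le_cast (α := ℝ)).2 (Fintype.card_pos (α := ι))]
  have hothers : ∀ j ≠ i₀, μ j ≤ -c := fun j hj =>
    (hpair j i₀ hj).resolve_right (not_le.2 hi₀)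
  refine ⟨i₀, ?_, hothers⟩
  have hrest : ∑ j ∈ Finset.univ.erase i₀, μ j ≤ ∑ _j ∈ Finset.univ.erase i₀, -c :=
    Finset.sum_le_sum fun j hj => hothers j (Finset.ne_of_mem_erase hj)
  rw [Finset.sum_const, Finset.card_erase_of_mem (Finset.mem_univ i₀), Finset.card_univ,
    nsmul_eq_mul, Nat.cast_sub Fintype.card_pos, Nat.cast_one] at hrest
  linarith [Finset.sum_erase_add Finset.univ μ (Finset.mem_univ i₀)]

lemma sign_pattern_of_sum_eq_zero (hsum : ∑ i, μ i = 0) (hc : 0 < c)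
    (hcard : 2 ≤ Fintype.card ι) (hpair : ∀ i j, i ≠ j → μ i ≤ -c ∨ μ j ≤ -c) :
    (∀ i, c ≤ |μ i|) ∧ (∃! i, 0 < μ i) ∧
      (∀ i, 0 < μ i → ((Fintype.card ι : ℝ) - 1) * c ≤ μ i) ∧
      (∀ i, ¬ 0 < μ i → μ i ≤ -c) := by
  have : Nonempty ι := Fintype.card_pos_iff.1 (by omega)
  obtain ⟨i₀, hbig, hothers⟩ := exists_le_and_forall_ne_le_neg hsum hc hpair
  have hcard' : (1 : ℝ) ≤ Fintype.card ι - 1 := by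
    have : (2 : ℝ) ≤ Fintype.card ι := by exact_mod_cast hcard
    linarith
  have hi₀ : c ≤ μ i₀ := by nlinarith
  have hunique : ∀ j, 0 < μ j → j = i₀ := fun j hj => by
    by_contra h
    linarith [hothers j h]
  refine ⟨fun i => ?_, ⟨i₀, by linarith, hunique⟩, fun i hi => hunique i hi ▸ hbig,
    fun i hi => hothers i fun h => hi (h ▸ by linarith)⟩
  by_cases h : i = i₀
  · exact le_abs.2 (Or.inl (h ▸ hi₀))
  · exact le_abs.2 (Or.inr (by linarith [hothers i h]))

end SumZero

lemma tendsto_rpow_neg_mul_log_rpow {b : ℝ} (hb : 0 < b) (a : ℝ) :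
    Tendsto (fun x : ℝ => x ^ (-b) * log x ^ a) atTop (𝓝 0) := by
  refine (isLittleO_log_rpow_rpow_atTop a hb).tendsto_div_nhds_zero.congr' ?_
  filter_upwards [eventually_gt_atTop 0] with x hx
  rw [rpow_neg hx.le, div_eq_mul_inv, mul_comm]

lemma tendsto_natCast_mul_rpow_neg_mul_log_rpow_pow {a b : ℝ} {K : ℕ} (hK : 1 < b * K) :
    Tendsto (fun n : ℕ => (n : ℝ) * ((n : ℝ) ^ (-b) * log n ^ a) ^ K) atTop (𝓝 0) := by
  refine ((tendsto_rpow_neg_mul_log_rpow (sub_pos.2 hK) (a * K)).comp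
    tendsto_natCast_atTop_atTop).congr' ?_
  filter_upwards [eventually_ge_atTop 1] with n hn
  have hn0 : (0 : ℝ) < n := by exact_mod_cast hn
  rw [Function.comp_apply, mul_pow, ← rpow_mul_natCast hn0.le,
    ← rpow_mul_natCast (Real.log_natCast_nonneg n), ← mul_assoc, ← rpow_one_add' hn0.le]
  · ring_nf
  · exact ne_of_lt (by linarith)

lemma eventually_rpow_neg_mul_log_rpow_le {a b : ℝ} (hb : 0 < b) {K : ℕ} (hK : 1 < b * K) :
    ∀ᶠ n : ℕ in atTop, (n : ℝ) ^ (-b) * log n ^ a ≤ 1 ∧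
      K * ((n : ℝ) ^ (-b) * log n ^ a) + n * ((n : ℝ) ^ (-b) * log n ^ a) ^ K ≤ 1 / 2 := by
  have hτ : Tendsto (fun n : ℕ => (n : ℝ) ^ (-b) * log n ^ a) atTop (𝓝 0) :=
    (tendsto_rpow_neg_mul_log_rpow hb a).comp tendsto_natCast_atTop_atTop
  have hKτ := (hτ.const_mul (K : ℝ)).add (tendsto_natCast_mul_rpow_neg_mul_log_rpow_pow (a := a) hK)
  rw [mul_zero, add_zero] at hKτ
  exact (hτ.eventually (eventually_le_nhds one_pos)).and
    (hKτ.eventually (eventually_le_nhds one_half_pos))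

lemma eventually_pos_of_tendsto_div_rpow {f : ℕ → ℝ} {β c : ℝ} (hc : 0 < c)
    (hf : Tendsto (fun n => f n / (n : ℝ) ^ β) atTop (𝓝 c)) : ∀ᶠ n in atTop, 0 < f n := by
  filter_upwards [hf.eventually (lt_mem_nhds hc), eventually_ge_atTop 1] with n hn hn1
  exact (div_pos_iff_of_pos_right (rpow_pos_of_pos (by exact_mod_cast hn1) β)).1 hn

theorem eigenvalues_of_alpha_distance_matrix_general
    -- exponent
    (α : ℝ) (hα : α ∈ Set.Ioo (0:ℝ) 2)
    -- high-dimensional regime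
    (β c : ℝ) (hβ : 0 < β) (hc : 0 < c)
    (d : ℕ → ℕ)
    (S : ∀ n, Matrix (Fin (d n)) (Fin (d n)) ℝ)
    (hreg : Tendsto (fun n => (S n).trace / (n : ℝ) ^ β) atTop (𝓝 c))
    -- fixed ε > 0
    (ε : ℝ) :
    ∃ c' : ℝ, 0 < c' ∧ ∃ N : ℕ, ∀ n ≥ N,
      ∀ xs : Fin n → (Fin (d n) → ℝ),
        -- the concentration event E_X for the sample
        (∀ i j : Fin n,
          |dotp (xs i) (xs j) / (S n).trace - (if i = j then (1:ℝ) else 0)| ≤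
            (n : ℝ) ^ (-(β / 2)) * Real.log n ^ ((1 + ε) / 2)) →
        -- conclusions on the eigenvalues of D_α (with z_i = x_i/√(tr Σ))
        ∀ hH : (distMatrix α
            (fun i => (Real.sqrt (S n).trace)⁻¹ • xs i)).IsHermitian,
          (∀ i, c' ≤ |hH.eigenvalues i|) ∧
          (∃! i, 0 < hH.eigenvalues i) ∧
          (∀ i, 0 < hH.eigenvalues i → ((n : ℝ) - 1) * c' ≤ hH.eigenvalues i) ∧
          (∀ i, ¬ 0 < hH.eigenvalues i → hH.eigenvalues i ≤ -c') := by
  set K := ⌊2 / β⌋₊ + 1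
  have hK : 1 < β / 2 * K := by
    have := (div_lt_iff₀ hβ).1 (Nat.lt_floor_add_one (2 / β))
    push_cast [K]
    linarith
  have hC := fracPowConst_pos (γ := α / 2) (by linarith [hα.1]) (by linarith [hα.2])
  refine ⟨2 ^ K / K.factorial * exp (-8) / 8 / fracPowConst (α / 2), by positivity, ?_⟩
  obtain ⟨N, hN⟩ := eventually_atTop.1 <| (eventually_pos_of_tendsto_div_rpow hc hreg).and <|
    (eventually_rpow_neg_mul_log_rpow_le (a := (1 + ε) / 2) (half_pos hβ) hK).and
      (eventually_ge_atTop 2)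
  refine ⟨N, fun n hn xs hE hH => ?_⟩
  obtain ⟨htr, ⟨hτ1, hKτ⟩, hn2⟩ := hN n hn
  have hz : ∀ i j, |dotp ((Real.sqrt (S n).trace)⁻¹ • xs i) ((Real.sqrt (S n).trace)⁻¹ • xs j) -
      if i = j then 1 else 0| ≤ (n : ℝ) ^ (-(β / 2)) * Real.log n ^ ((1 + ε) / 2) := by
    intro i j
    rw [dotp_smul_smul, inv_pow, sq_sqrt htr.le, inv_mul_eq_div]
    exact hE i j
  have hτ0 := mul_nonneg (rpow_nonneg n.cast_nonneg (-(β / 2)))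
    (rpow_nonneg (log_natCast_nonneg n) ((1 + ε) / 2))
  have hpair := fun i j (hij : i ≠ j) => hH.eigenvalues_le_or_eigenvalues_le (w := fun _ => 1)
    (fun v hv => dotProduct_distMatrix_mulVec_le hα hτ0 hτ1 hz hKτ
      (by simpa [dotProduct] using hv)) hij
  simpa using sign_pattern_of_sum_eq_zero (by simpa [distMatrix_trace hα.1] using
    hH.trace_eq_sum_eigenvalues.symm) (by positivity) (by simpa using hn2) hpair

theorem eigenvalues_of_alpha_distance_matrix
    -- exponent
    (α : ℝ) (hα : α ∈ Set.Ioo (0:ℝ) 2)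
    -- high-dimensional regime
    (β c : ℝ) (hβ : 0 < β) (hc : 0 < c)
    (d : ℕ → ℕ)
    (S : ∀ n, Matrix (Fin (d n)) (Fin (d n)) ℝ)
    (hS : ∀ n, (S n).PosSemidef) (hSnorm : ∀ n, OpNormOne (S n))
    (hreg : Tendsto (fun n => (S n).trace / (n : ℝ) ^ β) atTop (𝓝 c))
    -- fixed ε > 0
    (ε : ℝ) (hε : 0 < ε) :
    ∃ c' : ℝ, 0 < c' ∧ ∃ N : ℕ, ∀ n ≥ N,
      ∀ xs : Fin n → (Fin (d n) → ℝ),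
        -- the concentration event E_X for the sample
        (∀ i j : Fin n,
          |dotp (xs i) (xs j) / (S n).trace - (if i = j then (1:ℝ) else 0)| ≤
            (n : ℝ) ^ (-(β / 2)) * Real.log n ^ ((1 + ε) / 2)) →
        -- conclusions on the eigenvalues of D_α (with z_i = x_i/√(tr Σ))
        ∀ hH : (distMatrix α
            (fun i => (Real.sqrt (S n).trace)⁻¹ • xs i)).IsHermitian,
          (∀ i, c' ≤ |hH.eigenvalues i|) ∧
          (∃! i, 0 < hH.eigenvalues i) ∧
          (∀ i, 0 < hH.eigenvalues i → ((n : ℝ) - 1) * c' ≤ hH.eigenvalues i) ∧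
          (∀ i, ¬ 0 < hH.eigenvalues i → hH.eigenvalues i ≤ -c') :=
  eigenvalues_of_alpha_distance_matrix_general α hα β c hβ hc d S hreg ε
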